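/- Let {φ_i}_{i=1}^{d²} be rank-1 projectors on ℂ^d and α ≥ 1 a real number. Then K_α = ∑_{i≠j} (tr(φ_i φ_j))^{2α} ≥ d²(d−1)/(d+1)^{2α−1}, with equality if and only if the set is a SIC (tr(φ_i φ_j) = 1/(d+1) for all i ≠ j). -/

import Mathlib

/-!
Write `xᵢⱼ = tr (φᵢ φⱼ) = |⟨vᵢ, vⱼ⟩|² ≥ 0`. For `α = 1` the frame operator `S = ∑ᵢ φᵢ` gives
`∑ᵢⱼ xᵢⱼ = tr (S²) ≥ (tr S)² / d = d³`, and removing the diagonal `xᵢᵢ = 1` leaves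
`∑_{i≠j} xᵢⱼ ≥ d²(d - 1)`, i.e. the off-diagonal mean is at least `c = 1/(d+1)`.
Since `x ↦ x^{2α}` is strictly convex, it lies above its tangent line at `c`, strictly away from
`c`; summing over the `d²(d² - 1)` off-diagonal pairs gives `K_α ≥ d²(d² - 1) c^{2α}`, with
equality exactly when every `xᵢⱼ = c`.
-/

open scoped BigOperators Kronecker
open Matrix

noncomputable section

/-- The primitive `d`-th root of unity `ω = e^{2πi/d}`. -/
def omega (d : ℕ) : ℂ := Complex.exp (2 * Real.pi * Complex.I / d)

/-- A fixed square root of `ω`: `τ = e^{πi/d}`, so `τ ^ 2 = ω`. -/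
def tau (d : ℕ) : ℂ := Complex.exp (Real.pi * Complex.I / d)

/-- Weyl–Heisenberg displacement operator `D_a = ω^{a₁a₂/2} X^{a₁} Z^{a₂}` on `ℂ^d`,
where `X |k⟩ = |k+1⟩` is the shift and `Z |k⟩ = ω^k |k⟩` is the clock (arithmetic mod `d`). -/
def Disp (d : ℕ) (a : ℤ × ℤ) : Matrix (ZMod d) (ZMod d) ℂ := fun j k =>
  tau d ^ (a.1 * a.2) * omega d ^ (a.2 * (k.val : ℤ)) * (if j = k + (a.1 : ZMod d) then 1 else 0)

/-- Rank-one projector `|v⟩⟨v|`. -/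
def proj {n : Type*} (v : n → ℂ) : Matrix n n ℂ := Matrix.vecMulVec v (star v)

/-- Stabilizer entropy of order `α` of a state `ρ` on `ℂ^d`. -/
def stabEntropy (d : ℕ) [NeZero d] (α : ℝ) (ρ : Matrix (ZMod d) (ZMod d) ℂ) : ℝ :=
  (1 / (1 - α)) * Real.log (∑ a : ZMod d × ZMod d,
      ((1 / d) * ‖(Disp d ((a.1.val : ℤ), (a.2.val : ℤ)) * ρ).trace‖ ^ 2) ^ α)
    - Real.log d


open Finset

section Projectors

open scoped ComplexOrder

variable {n : Type*} [Fintype n]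

lemma trace_proj (u : n → ℂ) : (proj u).trace = ((∑ k, ‖u k‖ ^ 2 : ℝ) : ℂ) := by
  simp [proj, dotProduct, Complex.mul_conj, Complex.normSq_eq_norm_sq]

lemma trace_proj_mul_proj (u w : n → ℂ) :
    (proj u * proj w).trace = (Complex.normSq (star u ⬝ᵥ w) : ℂ) := by
  rw [proj, proj, vecMulVec_mul_vecMulVec, trace_vecMulVec, dotProduct_smul, smul_eq_mul,
    dotProduct_comm u, star_dotProduct (v := w), Complex.star_def, Complex.mul_conj]

lemma re_trace_proj_mul_proj_nonneg (u w : n → ℂ) : 0 ≤ ((proj u * proj w).trace).re := by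
  rw [trace_proj_mul_proj, Complex.ofReal_re]
  exact Complex.normSq_nonneg _

lemma re_trace_proj_mul_self {u : n → ℂ} (hu : ∑ k, ‖u k‖ ^ 2 = 1) :
    ((proj u * proj u).trace).re = 1 := by
  have : star u ⬝ᵥ u = (proj u).trace := by rw [proj, trace_vecMulVec, dotProduct_comm]
  rw [trace_proj_mul_proj, this, trace_proj, hu]
  simp

lemma Matrix.IsHermitian.sq_re_trace_le {A : Matrix n n ℂ} (hA : A.IsHermitian) :
    A.trace.re ^ 2 ≤ Fintype.card n * (A * A).trace.re := by
  have hAA : (A * A).trace.re = ∑ i, ∑ j, Complex.normSq (A i j) := by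
    simp only [trace, diag, mul_apply, Complex.re_sum]
    refine sum_congr rfl fun i _ => sum_congr rfl fun j _ => ?_
    rw [← hA.apply j i, Complex.star_def, Complex.mul_conj, Complex.ofReal_re]
  calc A.trace.re ^ 2 = (∑ i, (A i i).re) ^ 2 := by rw [trace, Complex.re_sum]; rfl
    _ ≤ Fintype.card n * ∑ i, (A i i).re ^ 2 := sq_sum_le_card_mul_sum_sq
    _ ≤ Fintype.card n * ∑ i, ∑ j, Complex.normSq (A i j) := by
      gcongr with i
      calc (A i i).re ^ 2 ≤ Complex.normSq (A i i) := by rw [sq]; exact Complex.re_sq_le_normSq _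
        _ ≤ ∑ j, Complex.normSq (A i j) :=
          single_le_sum (fun j _ => Complex.normSq_nonneg _) (mem_univ i)
    _ = Fintype.card n * (A * A).trace.re := by rw [hAA]

variable {ι : Type*} [Fintype ι]

lemma sq_card_le_card_mul_sum_re_trace_proj_mul_proj (v : ι → n → ℂ)
    (hv : ∀ i, ∑ k, ‖v i k‖ ^ 2 = 1) :
    (Fintype.card ι : ℝ) ^ 2 ≤
      Fintype.card n * ∑ i, ∑ j, ((proj (v i) * proj (v j)).trace).re := by
  set S := ∑ i, proj (v i)
  have hS : S.IsHermitian :=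
    isSelfAdjoint_sum univ fun i _ => (posSemidef_vecMulVec_self_star (v i)).isHermitian
  have htr : S.trace.re = Fintype.card ι := by simp [S, trace_sum, trace_proj, hv]
  have hSS : (S * S).trace.re = ∑ i, ∑ j, ((proj (v i) * proj (v j)).trace).re := by
    simp only [S, sum_mul_sum, trace_sum, Complex.re_sum]
  rw [← hSS, ← htr]
  exact hS.sq_re_trace_le

lemma card_mul_card_sub_card_le_card_mul_sum_erase [DecidableEq ι] (v : ι → n → ℂ)
    (hv : ∀ i, ∑ k, ‖v i k‖ ^ 2 = 1) :
    (Fintype.card ι : ℝ) * (Fintype.card ι - Fintype.card n) ≤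
      Fintype.card n * ∑ i, ∑ j ∈ univ.erase i, ((proj (v i) * proj (v j)).trace).re := by
  have hsplit : ∀ i, ∑ j, ((proj (v i) * proj (v j)).trace).re =
      1 + ∑ j ∈ univ.erase i, ((proj (v i) * proj (v j)).trace).re := fun i => by
    rw [← add_sum_erase _ _ (mem_univ i), re_trace_proj_mul_self (hv i)]
  have hframe := sq_card_le_card_mul_sum_re_trace_proj_mul_proj v hv
  simp only [hsplit, sum_add_distrib, sum_const, card_univ, nsmul_eq_mul, mul_one] at hframe
  linarith

lemma sq_mul_sub_one_le_sum_erase {d : ℕ} (hd : 0 < d) (v : Fin (d ^ 2) → Fin d → ℂ)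
    (hv : ∀ i, ∑ k, ‖v i k‖ ^ 2 = 1) :
    (d : ℝ) ^ 2 * (d - 1) ≤ ∑ i, ∑ j ∈ univ.erase i, ((proj (v i) * proj (v j)).trace).re := by
  have hframe := card_mul_card_sub_card_le_card_mul_sum_erase v hv
  simp only [Fintype.card_fin, Nat.cast_pow] at hframe
  have hd' : (0 : ℝ) < d := by exact_mod_cast hd
  nlinarith

end Projectors

section Convexity

variable {c p y : ℝ}

lemma rpow_tangent_lt (hc : 0 < c) (hy : 0 ≤ y) (hp : 1 < p) (hyc : y ≠ c) :
    c ^ p + p * c ^ (p - 1) * (y - c) < y ^ p := by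
  set s := y / c - 1
  have hy_eq : y = c * (1 + s) := by rw [add_sub_cancel]; field_simp
  have hs : -1 ≤ s := by have := div_nonneg hy hc.le; linarith
  have hs0 : s ≠ 0 := fun h => hyc (by rw [hy_eq, h]; ring)
  have hcp : c ^ (p - 1) * c = c ^ p := by rw [← Real.rpow_add_one hc.ne']; ring_nf
  calc c ^ p + p * c ^ (p - 1) * (y - c) = c ^ p * (1 + p * s) := by
        rw [← hcp, hy_eq]; ring
    _ < c ^ p * (1 + s) ^ p :=
        mul_lt_mul_of_pos_left (one_add_mul_self_lt_rpow_one_add hs hs0 hp) (by positivity)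
    _ = y ^ p := by rw [hy_eq, Real.mul_rpow hc.le (by linarith)]

lemma rpow_tangent_le (hc : 0 < c) (hy : 0 ≤ y) (hp : 1 < p) :
    c ^ p + p * c ^ (p - 1) * (y - c) ≤ y ^ p := by
  rcases eq_or_ne y c with rfl | hyc
  · simp
  · exact (rpow_tangent_lt hc hy hp hyc).le

variable {ι : Type*} {s : Finset ι} {x : ι → ℝ}

lemma card_mul_rpow_le_sum_rpow_tangent (hp : 1 < p) (hc : 0 < c) (hsum : #s * c ≤ ∑ i ∈ s, x i) :
    #s * c ^ p ≤ ∑ i ∈ s, (c ^ p + p * c ^ (p - 1) * (x i - c)) := by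
  rw [sum_add_distrib, ← mul_sum, sum_sub_distrib, sum_const, sum_const, nsmul_eq_mul,
    nsmul_eq_mul]
  have : 0 ≤ p * c ^ (p - 1) := by positivity
  nlinarith

lemma card_mul_rpow_le_sum_rpow (hp : 1 < p) (hc : 0 < c) (hx : ∀ i ∈ s, 0 ≤ x i)
    (hsum : #s * c ≤ ∑ i ∈ s, x i) : #s * c ^ p ≤ ∑ i ∈ s, x i ^ p :=
  (card_mul_rpow_le_sum_rpow_tangent hp hc hsum).trans
    (sum_le_sum fun i hi => rpow_tangent_le hc (hx i hi) hp)

lemma sum_rpow_eq_card_mul_rpow_iff (hp : 1 < p) (hc : 0 < c) (hx : ∀ i ∈ s, 0 ≤ x i)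
    (hsum : #s * c ≤ ∑ i ∈ s, x i) : ∑ i ∈ s, x i ^ p = #s * c ^ p ↔ ∀ i ∈ s, x i = c := by
  refine ⟨fun h => ?_, fun h => by rw [sum_congr rfl fun i hi => by rw [h i hi], sum_const,
    nsmul_eq_mul]⟩
  by_contra! ⟨i, hi, hxc⟩
  have hlt := sum_lt_sum (fun j hj => rpow_tangent_le hc (hx j hj) hp)
    ⟨i, hi, rpow_tangent_lt hc (hx i hi) hp hxc⟩
  linarith [card_mul_rpow_le_sum_rpow_tangent hp hc hsum]

end Convexity

lemma sum_sum_erase_eq_sum_offDiag {ι M : Type*} [DecidableEq ι] [AddCommMonoid M]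
    (s : Finset ι) (f : ι → ι → M) :
    ∑ i ∈ s, ∑ j ∈ s.erase i, f i j = ∑ q ∈ s.offDiag, f q.1 q.2 :=
  (sum_finset_product' _ _ _ fun q => by simp [ne_comm, and_comm]).symm

/-- The `α`-orthogonality bound: for `d²` rank-one projectors on `ℂ^d` and real `α ≥ 1`,
`K_α = ∑_{i≠j} (tr(φᵢ φⱼ))^{2α} ≥ d²(d-1)/(d+1)^{2α-1}`, with equality iff the set is a
SIC, i.e. `tr(φᵢ φⱼ) = 1/(d+1)` for all `i ≠ j`. -/
theorem Kalpha_bound (d : ℕ) (hd : 0 < d) (α : ℝ) (hα : 1 ≤ α)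
    (v : Fin (d ^ 2) → Fin d → ℂ)
    (hv : ∀ i, ∑ k, ‖v i k‖ ^ 2 = 1) :
    ((d : ℝ) ^ 2 * ((d : ℝ) - 1) / ((d : ℝ) + 1) ^ (2 * α - 1) ≤
      ∑ i, ∑ j ∈ Finset.univ.erase i, ((proj (v i) * proj (v j)).trace).re ^ (2 * α)) ∧
    ((∑ i, ∑ j ∈ Finset.univ.erase i, ((proj (v i) * proj (v j)).trace).re ^ (2 * α) =
        (d : ℝ) ^ 2 * ((d : ℝ) - 1) / ((d : ℝ) + 1) ^ (2 * α - 1)) ↔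
      ∀ i j, i ≠ j → (proj (v i) * proj (v j)).trace = 1 / ((d : ℂ) + 1)) := by
  set x : Fin (d ^ 2) → Fin (d ^ 2) → ℝ := fun i j => ((proj (v i) * proj (v j)).trace).re
  set c : ℝ := 1 / ((d : ℝ) + 1)
  have hp : 1 < 2 * α := by linarith
  have hc : 0 < c := by positivity
  have hx : ∀ q ∈ (univ : Finset (Fin (d ^ 2))).offDiag, 0 ≤ x q.1 q.2 :=
    fun q _ => re_trace_proj_mul_proj_nonneg _ _
  have hcard : (#(univ : Finset (Fin (d ^ 2))).offDiag : ℝ) = d ^ 2 * (d ^ 2 - 1) := by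
    rw [offDiag_card, card_univ, Fintype.card_fin, Nat.cast_sub (Nat.le_mul_self _)]
    push_cast
    ring
  have hoff : #(univ : Finset (Fin (d ^ 2))).offDiag * c ≤ ∑ q ∈ univ.offDiag, x q.1 q.2 := by
    rw [hcard, ← sum_sum_erase_eq_sum_offDiag,
      show (d : ℝ) ^ 2 * (d ^ 2 - 1) * c = d ^ 2 * (d - 1) by simp only [c]; field_simp; ring]
    exact sq_mul_sub_one_le_sum_erase hd v hv
  have hbound : (d : ℝ) ^ 2 * (d - 1) / (d + 1) ^ (2 * α - 1) =
      #(univ : Finset (Fin (d ^ 2))).offDiag * c ^ (2 * α) := by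
    rw [hcard, Real.rpow_sub_one (by positivity), Real.div_rpow zero_le_one (by positivity),
      Real.one_rpow]
    field_simp
    ring
  have hsic : ∀ i j, (proj (v i) * proj (v j)).trace = 1 / ((d : ℂ) + 1) ↔ x i j = c := by
    intro i j
    rw [← Complex.ofReal_inj]
    simp [x, c, trace_proj_mul_proj]
  rw [sum_sum_erase_eq_sum_offDiag, hbound]
  refine ⟨card_mul_rpow_le_sum_rpow hp hc hx hoff,
    (sum_rpow_eq_card_mul_rpow_iff hp hc hx hoff).trans ?_⟩
  simp only [mem_offDiag, mem_univ, true_and, Prod.forall, hsic]
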